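/- arXiv:2605.02845 — 6 statements merged into one kernel-verified Lean document; each statement's English description precedes it below -/
import Mathlib

section
/- Let x, y, z be nonnegative real numbers with x + y = z and 0 ≤ z ≤ 1/2. Then 4(x² + y²) − 8(x⁴ + y⁴) ≥ 2z² − z⁴. -/
/-- For nonnegative reals x, y, z with x + y = z and z ≤ 1/2,
4(x² + y²) − 8(x⁴ + y⁴) ≥ 2z² − z⁴. -/
theorem helper_amgm_inequality (x y z : ℝ)
    (hx : 0 ≤ x) (hy : 0 ≤ y) (hz : 0 ≤ z)
    (hxy : x + y = z) (hz2 : z ≤ 1 / 2) :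
    4 * (x ^ 2 + y ^ 2) - 8 * (x ^ 4 + y ^ 4) ≥ 2 * z ^ 2 - z ^ 4 := by
  subst hxy
  nlinarith [mul_nonneg (sq_nonneg (x - y)) (by nlinarith [mul_nonneg hx hy] : (0:ℝ) ≤ 4*x*y - 7*(x+y)^2 + 2)]
end

section
/- Let n ≥ 1 and let H be a real symmetric n×n matrix whose off-diagonal entries are all nonpositive (a stoquastic matrix). Then there exists a vector v ∈ ℝⁿ with nonnegative entries and Σ_i v(i)² = 1 such that vᵀHv ≤ wᵀHw for every w ∈ ℝⁿ with Σ_i w(i)² = 1. In particular, the minimal eigenvalue of H is attained by a nonnegative unit vector. -/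
/-!
The quadratic form is minimised on the compact unit sphere at some `v`. Replacing `v` by `|v|`
keeps it on the sphere and does not increase the form: diagonal terms are unchanged, and an
off-diagonal term `H i j * (v i * v j)` can only decrease, since `H i j ≤ 0` and
`v i * v j ≤ |v i| * |v j|`. So `|v|` is a nonnegative minimiser.
-/

open Finset

variable {ι : Type*} [Fintype ι]

theorem isCompact_setOf_sum_sq_eq_one : IsCompact {v : ι → ℝ | ∑ i, v i ^ 2 = 1} := by
  refine Metric.isCompact_of_isClosed_isBounded (isClosed_eq (by fun_prop) continuous_const) ?_
  refine (Metric.isBounded_closedBall (x := (0 : ι → ℝ)) (r := 1)).subset fun v hv => ?_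
  rw [mem_closedBall_zero_iff, pi_norm_le_iff_of_nonneg zero_le_one]
  intro i
  rw [Real.norm_eq_abs, ← sq_le_one_iff_abs_le_one]
  exact hv ▸ single_le_sum (fun j _ => sq_nonneg (v j)) (mem_univ i)

theorem sum_sum_abs_mul_mul_abs_le_of_offDiag_nonpos (H : Matrix ι ι ℝ)
    (hH : ∀ i j, i ≠ j → H i j ≤ 0) (v : ι → ℝ) :
    ∑ i, ∑ j, |v i| * H i j * |v j| ≤ ∑ i, ∑ j, v i * H i j * v j := by
  refine sum_le_sum fun i _ => sum_le_sum fun j _ => ?_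
  rcases eq_or_ne i j with rfl | hij
  · rw [mul_right_comm, abs_mul_abs_self, mul_right_comm]
  · calc |v i| * H i j * |v j| = H i j * (|v i| * |v j|) := by ring
      _ ≤ H i j * (v i * v j) :=
        mul_le_mul_of_nonpos_left (abs_mul (v i) (v j) ▸ le_abs_self _) (hH i j hij)
      _ = v i * H i j * v j := by ring

theorem stoquastic_nonneg_ground_state_general (n : ℕ) (hn : 1 ≤ n)
    (H : Matrix (Fin n) (Fin n) ℝ)
    (hstoq : ∀ i j, i ≠ j → H i j ≤ 0) :
    ∃ v : Fin n → ℝ, (∀ i, 0 ≤ v i) ∧ (∑ i, (v i) ^ 2 = 1) ∧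
      ∀ w : Fin n → ℝ, (∑ i, (w i) ^ 2 = 1) →
        ∑ i, ∑ j, v i * H i j * v j ≤ ∑ i, ∑ j, w i * H i j * w j := by
  have hne : {v : Fin n → ℝ | ∑ i, v i ^ 2 = 1}.Nonempty :=
    ⟨Pi.single ⟨0, hn⟩ 1, by simp [Pi.single_apply]⟩
  obtain ⟨v, hv : ∑ i, v i ^ 2 = 1, hmin⟩ := isCompact_setOf_sum_sq_eq_one.exists_isMinOn hne
    (f := fun w : Fin n → ℝ => ∑ i, ∑ j, w i * H i j * w j) (by fun_prop)
  exact ⟨fun i => |v i|, fun i => abs_nonneg _, by simpa only [sq_abs] using hv, fun w hw =>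
    (sum_sum_abs_mul_mul_abs_le_of_offDiag_nonpos H hstoq v).trans (hmin hw)⟩

/-- A real symmetric stoquastic matrix (nonpositive off-diagonal
entries) has a nonnegative unit vector attaining the minimum of the quadratic
form over all unit vectors, i.e. attaining the minimal eigenvalue. -/
theorem stoquastic_nonneg_ground_state (n : ℕ) (hn : 1 ≤ n)
    (H : Matrix (Fin n) (Fin n) ℝ) (hsymm : H.IsSymm)
    (hstoq : ∀ i j, i ≠ j → H i j ≤ 0) :
    ∃ v : Fin n → ℝ, (∀ i, 0 ≤ v i) ∧ (∑ i, (v i) ^ 2 = 1) ∧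
      ∀ w : Fin n → ℝ, (∑ i, (w i) ^ 2 = 1) →
        ∑ i, ∑ j, v i * H i j * v j ≤ ∑ i, ∑ j, w i * H i j * w j :=
  stoquastic_nonneg_ground_state_general n hn H hstoq
end

section
/- Fix k, d ≥ 1 and let I = (Fin k → Fin d). Let ρ and σ be complex matrices indexed by I, and let S be a subset of Fin k. Let SWAP_S be the matrix indexed by I × I with SWAP_S((a,b),(a',b')) = 1 if a(i) = b'(i) and b(i) = a'(i) for all i ∈ S while a(i) = a'(i) and b(i) = b'(i) for all i ∉ S, and 0 otherwise. Then Tr(SWAP_S · (ρ ⊗ σ)) = Tr(ρ_S σ_S), where ρ_S and σ_S are the partial traces of ρ and σ onto the registers in S. -/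
open Matrix Kronecker

/-- Merge a function on registers in `S` with a function on registers outside
`S` into a function on all `k` registers. -/
def mergeFn {k d : ℕ} (S : Finset (Fin k))
    (u : {i // i ∈ S} → Fin d) (w : {i // i ∉ S} → Fin d) : Fin k → Fin d :=
  fun i => if h : i ∈ S then u ⟨i, h⟩ else w ⟨i, h⟩

/-- Partial trace of a matrix on (ℂ^d)^{⊗k} onto the registers in `S`. -/
noncomputable def ptrace {k d : ℕ} (S : Finset (Fin k))
    (ρ : Matrix (Fin k → Fin d) (Fin k → Fin d) ℂ) :
    Matrix ({i // i ∈ S} → Fin d) ({i // i ∈ S} → Fin d) ℂ :=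
  Matrix.of fun u v => ∑ w : {i // i ∉ S} → Fin d, ρ (mergeFn S u w) (mergeFn S v w)

/-- The operator SWAP_S swapping the two copies of the registers in `S`. -/
def swapOn {k d : ℕ} (S : Finset (Fin k)) :
    Matrix ((Fin k → Fin d) × (Fin k → Fin d)) ((Fin k → Fin d) × (Fin k → Fin d)) ℂ :=
  Matrix.of fun p q =>
    if (∀ i ∈ S, p.1 i = q.2 i ∧ p.2 i = q.1 i) ∧
       (∀ i ∉ S, p.1 i = q.1 i ∧ p.2 i = q.2 i) then 1 else 0

lemma mergeFn_restrict {k d : ℕ} (S : Finset (Fin k))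
    (u : {i // i ∈ S} → Fin d) (w : {i // i ∉ S} → Fin d) :
    (fun i : {i // i ∈ S} => mergeFn S u w i) = u := by
  funext i; simp [mergeFn, i.2]

lemma mergeFn_corestrict {k d : ℕ} (S : Finset (Fin k))
    (u : {i // i ∈ S} → Fin d) (w : {i // i ∉ S} → Fin d) :
    (fun i : {i // i ∉ S} => mergeFn S u w i) = w := by
  funext i; simp [mergeFn, i.2]

lemma swapOn_cond_iff {k d : ℕ} (S : Finset (Fin k))
    (p q : (Fin k → Fin d) × (Fin k → Fin d)) :
    ((∀ i ∈ S, p.1 i = q.2 i ∧ p.2 i = q.1 i) ∧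
       (∀ i ∉ S, p.1 i = q.1 i ∧ p.2 i = q.2 i)) ↔
    q = (mergeFn S (fun i => p.2 i) (fun i => p.1 i),
         mergeFn S (fun i => p.1 i) (fun i => p.2 i)) := by
  constructor
  · rintro ⟨h1, h2⟩
    obtain ⟨q1, q2⟩ := q
    simp only [Prod.mk.injEq]
    constructor <;> funext i <;> simp only [mergeFn] <;> split
    · exact ((h1 i ‹_›).2).symm
    · exact ((h2 i ‹_›).1).symm
    · exact ((h1 i ‹_›).1).symm
    · exact ((h2 i ‹_›).2).symm
  · rintro rfl
    constructor
    · intro i hi; constructor <;> simp [mergeFn, hi]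
    · intro i hi; constructor <;> simp [mergeFn, hi]

/-- The reindexing equivalence used in the proof. -/
def shuffleEquiv {A B : Type*} : ((A × A) × (B × B)) ≃ ((A × B) × (A × B)) :=
  ⟨fun x => ((x.1.2, x.2.1), (x.1.1, x.2.2)),
   fun y => ((y.2.1, y.1.1), (y.1.2, y.2.2)),
   fun _ => rfl, fun _ => rfl⟩


/-- For complex matrices ρ, σ on (ℂ^d)^{⊗k} and S ⊆ Fin k,
Tr(SWAP_S (ρ ⊗ σ)) = Tr(ρ_S σ_S). -/
theorem trace_swapOn_kronecker (k d : ℕ) (hk : 1 ≤ k) (hd : 1 ≤ d)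
    (ρ σ : Matrix (Fin k → Fin d) (Fin k → Fin d) ℂ) (S : Finset (Fin k)) :
    (swapOn (d := d) S * (ρ ⊗ₖ σ)).trace = (ptrace S ρ * ptrace S σ).trace := by
  classical
  set E := Equiv.piEquivPiSubtypeProd (· ∈ S) (fun _ : Fin k => Fin d) with hE
  set EQ : ((({i // i ∈ S} → Fin d) × ({i // i ∈ S} → Fin d)) ×
            (({i // i ∉ S} → Fin d) × ({i // i ∉ S} → Fin d)))
      ≃ ((Fin k → Fin d) × (Fin k → Fin d)) :=
    shuffleEquiv.trans (E.symm.prodCongr E.symm) with hEQ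
  calc (swapOn (d := d) S * (ρ ⊗ₖ σ)).trace
      = ∑ p : (Fin k → Fin d) × (Fin k → Fin d),
          ρ (mergeFn S (fun i => p.2 i) (fun i => p.1 i)) p.1 *
          σ (mergeFn S (fun i => p.1 i) (fun i => p.2 i)) p.2 := by
        rw [Matrix.trace]
        simp only [Matrix.diag, Matrix.mul_apply, swapOn, Matrix.of_apply]
        refine Fintype.sum_congr _ _ fun p => ?_
        simp only [swapOn_cond_iff S p]
        simp only [ite_mul, one_mul, zero_mul, Finset.sum_ite_eq',
          Finset.mem_univ, if_true, Matrix.kroneckerMap_apply]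
    _ = ∑ y : (({i // i ∈ S} → Fin d) × ({i // i ∈ S} → Fin d)) ×
              (({i // i ∉ S} → Fin d) × ({i // i ∉ S} → Fin d)),
          ρ (mergeFn S y.1.1 y.2.1) (mergeFn S y.1.2 y.2.1) *
          σ (mergeFn S y.1.2 y.2.2) (mergeFn S y.1.1 y.2.2) := by
        rw [← Equiv.sum_comp EQ]
        refine Fintype.sum_congr _ _ fun y => ?_
        obtain ⟨⟨u, v⟩, ⟨w, w'⟩⟩ := y
        have h1 : (EQ ((u, v), (w, w'))).1 = mergeFn S v w := rfl
        have h2 : (EQ ((u, v), (w, w'))).2 = mergeFn S u w' := rfl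
        rw [h1, h2, mergeFn_restrict, mergeFn_restrict, mergeFn_corestrict,
          mergeFn_corestrict]
    _ = (ptrace S ρ * ptrace S σ).trace := by
        rw [Matrix.trace]
        simp only [Matrix.diag, Matrix.mul_apply, ptrace, Matrix.of_apply,
          Finset.sum_mul_sum, Fintype.sum_prod_type]
end

section
/- Let A, B, C be complex D×D Hermitian matrices with A = B + δ·C for some real δ ≥ 0, such that B is positive semidefinite, C is positive semidefinite, and I − C is positive semidefinite (i.e., 0 ⪯ C ⪯ I). Let η be a unit vector with Bη = 0 and let ω be a unit vector with |⟨ω, η⟩|² = 1 − p for some p ∈ [0,1]. Then ⟨ω, Aω⟩ ≥ (1 − p)·⟨η, Aη⟩ − 2δ·√p. -/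
/-!
Write `ω = c • η + v` with `c = ⟨η, ω⟩` and `v ⊥ η`, so that `|c|² = 1 - p` and `‖v‖² = p`.
Since `C ⪰ 0`, `x ↦ √⟨x, C x⟩` is a seminorm, and the reverse triangle inequality gives
`⟨ω, C ω⟩ ≥ ‖c • η‖_C² - 2 ‖c • η‖_C ‖v‖_C`, where `‖c • η‖_C² = (1 - p) ⟨η, C η⟩ ≤ 1` and
`‖v‖_C ≤ ‖v‖ = √p` because `C ⪯ 1`. Finally `⟨ω, B ω⟩ ≥ 0` and `⟨η, A η⟩ = δ ⟨η, C η⟩` as `B η = 0`.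
-/

open Matrix
open scoped ComplexOrder

theorem norm_sq_sub_two_mul_le_norm_add_sq {E : Type*} [SeminormedAddGroup E] (x y : E) :
    ‖x‖ ^ 2 - 2 * ‖x‖ * ‖y‖ ≤ ‖x + y‖ ^ 2 := by
  have := norm_le_add_norm_add x y
  rcases le_total ‖y‖ ‖x‖ with h | h
  · nlinarith [norm_nonneg (x + y), norm_nonneg y]
  · nlinarith [norm_nonneg x, norm_nonneg (x + y)]

namespace Matrix

variable {n 𝕜 : Type*} [Fintype n] [RCLike 𝕜]

theorem PosSemidef.re_dotProduct_mulVec_add_ge {M : Matrix n n 𝕜} (hM : M.PosSemidef)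
    (x y : n → 𝕜) :
    RCLike.re (star x ⬝ᵥ M *ᵥ x)
        - 2 * √(RCLike.re (star x ⬝ᵥ M *ᵥ x)) * √(RCLike.re (star y ⬝ᵥ M *ᵥ y))
      ≤ RCLike.re (star (x + y) ⬝ᵥ M *ᵥ (x + y)) := by
  -- `‖·‖` on `n → 𝕜` would resolve to the sup norm, so the seminorm of `M` is named explicitly.
  let N := M.toSeminormedAddCommGroup hM
  have hnorm (z : n → 𝕜) : √(RCLike.re (star z ⬝ᵥ M *ᵥ z)) = @norm _ N.toNorm z := by
    rw [dotProduct_comm]; rfl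
  have hsq (z : n → 𝕜) : RCLike.re (star z ⬝ᵥ M *ᵥ z) = (@norm _ N.toNorm z) ^ 2 := by
    rw [← hnorm, Real.sq_sqrt (hM.re_dotProduct_nonneg z)]
  rw [hnorm, hnorm, hsq, hsq]
  exact @norm_sq_sub_two_mul_le_norm_add_sq _ N.toSeminormedAddGroup x y

theorem re_dotProduct_mulVec_le_of_posSemidef_sub {M N : Matrix n n 𝕜} (h : (N - M).PosSemidef)
    (x : n → 𝕜) : RCLike.re (star x ⬝ᵥ M *ᵥ x) ≤ RCLike.re (star x ⬝ᵥ N *ᵥ x) := by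
  have := h.re_dotProduct_nonneg x
  rwa [sub_mulVec, dotProduct_sub, map_sub, sub_nonneg] at this

theorem star_smul_dotProduct_mulVec_smul (M : Matrix n n 𝕜) (c : 𝕜) (x : n → 𝕜) :
    star (c • x) ⬝ᵥ M *ᵥ (c • x) = ((‖c‖ ^ 2 : ℝ) : 𝕜) * (star x ⬝ᵥ M *ᵥ x) := by
  rw [star_smul, mulVec_smul, dotProduct_smul, smul_dotProduct, RCLike.ofReal_pow,
    ← RCLike.conj_mul]
  simp only [smul_eq_mul, RCLike.star_def]
  ring

theorem star_sub_smul_dotProduct_sub_smul {η : n → 𝕜} (hη : star η ⬝ᵥ η = 1) (ω : n → 𝕜) :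
    star (ω - (star η ⬝ᵥ ω) • η) ⬝ᵥ (ω - (star η ⬝ᵥ ω) • η)
      = star ω ⬝ᵥ ω - ((‖star η ⬝ᵥ ω‖ ^ 2 : ℝ) : 𝕜) := by
  have hconj : star ω ⬝ᵥ η = starRingEnd 𝕜 (star η ⬝ᵥ ω) := star_dotProduct ω η
  rw [RCLike.ofReal_pow, ← RCLike.conj_mul, star_sub, star_smul]
  simp only [sub_dotProduct, dotProduct_sub, smul_dotProduct, dotProduct_smul, smul_eq_mul, hη,
    hconj, RCLike.star_def]
  ring

theorem PosSemidef.le_re_dotProduct_mulVec_of_overlap [DecidableEq n] {C : Matrix n n 𝕜} (hC : C.PosSemidef)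
    (hCle : (1 - C).PosSemidef) {η ω : n → 𝕜} (hη : star η ⬝ᵥ η = 1) (hω : star ω ⬝ᵥ ω = 1)
    {p : ℝ} (hp0 : 0 ≤ p) (hover : ‖star ω ⬝ᵥ η‖ ^ 2 = 1 - p) :
    (1 - p) * RCLike.re (star η ⬝ᵥ C *ᵥ η) - 2 * √p ≤ RCLike.re (star ω ⬝ᵥ C *ᵥ ω) := by
  have hc : ‖star η ⬝ᵥ ω‖ ^ 2 = 1 - p := by rw [star_dotProduct η ω, norm_star, hover]
  set c := star η ⬝ᵥ ω
  set v := ω - c • η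
  have hv : RCLike.re (star v ⬝ᵥ C *ᵥ v) ≤ p := by
    have := re_dotProduct_mulVec_le_of_posSemidef_sub hCle v
    rw [one_mulVec, star_sub_smul_dotProduct_sub_smul hη, hω, hc] at this
    simpa using this
  have hηC : RCLike.re (star η ⬝ᵥ C *ᵥ η) ≤ 1 := by
    simpa [hη] using re_dotProduct_mulVec_le_of_posSemidef_sub hCle η
  have hcη : RCLike.re (star (c • η) ⬝ᵥ C *ᵥ (c • η))
      = (1 - p) * RCLike.re (star η ⬝ᵥ C *ᵥ η) := by
    rw [star_smul_dotProduct_mulVec_smul, hc, RCLike.re_ofReal_mul]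
  have hcη_le : √((1 - p) * RCLike.re (star η ⬝ᵥ C *ᵥ η)) ≤ 1 :=
    Real.sqrt_le_one.mpr (mul_le_one₀ (by linarith) (hC.re_dotProduct_nonneg η) hηC)
  have hv_le : √(RCLike.re (star v ⬝ᵥ C *ᵥ v)) ≤ √p := Real.sqrt_le_sqrt hv
  have h := hC.re_dotProduct_mulVec_add_ge (c • η) v
  rw [add_sub_cancel, hcη] at h
  nlinarith [Real.sqrt_nonneg ((1 - p) * RCLike.re (star η ⬝ᵥ C *ᵥ η)),
    Real.sqrt_nonneg (RCLike.re (star v ⬝ᵥ C *ᵥ v))]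

end Matrix

theorem perturbative_lower_bound_general (D : ℕ)
    (A B C : Matrix (Fin D) (Fin D) ℂ)
    (δ : ℝ) (hδ : 0 ≤ δ) (hABC : A = B + (δ : ℂ) • C)
    (hBpsd : B.PosSemidef) (hCpsd : C.PosSemidef) (hCle : (1 - C).PosSemidef)
    (η ω : Fin D → ℂ)
    (hη : star η ⬝ᵥ η = 1) (hω : star ω ⬝ᵥ ω = 1)
    (hBη : B.mulVec η = 0)
    (p : ℝ) (hp0 : 0 ≤ p)
    (hover : ‖star ω ⬝ᵥ η‖ ^ 2 = 1 - p) :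
    (1 - p) * (star η ⬝ᵥ A.mulVec η).re - 2 * δ * Real.sqrt p
      ≤ (star ω ⬝ᵥ A.mulVec ω).re := by
  have hωC : (1 - p) * (star η ⬝ᵥ C *ᵥ η).re - 2 * √p ≤ (star ω ⬝ᵥ C *ᵥ ω).re :=
    hCpsd.le_re_dotProduct_mulVec_of_overlap hCle hη hω hp0 hover
  have hBω : 0 ≤ (star ω ⬝ᵥ B *ᵥ ω).re := hBpsd.re_dotProduct_nonneg ω
  have hquad (x : Fin D → ℂ) :
      (star x ⬝ᵥ A *ᵥ x).re = (star x ⬝ᵥ B *ᵥ x).re + δ * (star x ⬝ᵥ C *ᵥ x).re := by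
    rw [hABC, add_mulVec, smul_mulVec, dotProduct_add, dotProduct_smul, Complex.add_re,
      smul_eq_mul, Complex.re_ofReal_mul]
  rw [hquad, hquad, hBη, dotProduct_zero, Complex.zero_re, zero_add]
  nlinarith [mul_le_mul_of_nonneg_left hωC hδ]

/-- Perturbative lower bound. If A = B + δC with δ ≥ 0, B ⪰ 0,
0 ⪯ C ⪯ I (all Hermitian), η a unit vector with Bη = 0, and ω a unit vector
with |⟨ω,η⟩|² = 1 − p, then ⟨ω, Aω⟩ ≥ (1 − p)·⟨η, Aη⟩ − 2δ√p. -/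
theorem perturbative_lower_bound (D : ℕ)
    (A B C : Matrix (Fin D) (Fin D) ℂ)
    (hA : A.IsHermitian) (hB : B.IsHermitian) (hC : C.IsHermitian)
    (δ : ℝ) (hδ : 0 ≤ δ) (hABC : A = B + (δ : ℂ) • C)
    (hBpsd : B.PosSemidef) (hCpsd : C.PosSemidef) (hCle : (1 - C).PosSemidef)
    (η ω : Fin D → ℂ)
    (hη : star η ⬝ᵥ η = 1) (hω : star ω ⬝ᵥ ω = 1)
    (hBη : B.mulVec η = 0)
    (p : ℝ) (hp0 : 0 ≤ p) (hp1 : p ≤ 1)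
    (hover : ‖star ω ⬝ᵥ η‖ ^ 2 = 1 - p) :
    (1 - p) * (star η ⬝ᵥ A.mulVec η).re - 2 * δ * Real.sqrt p
      ≤ (star ω ⬝ᵥ A.mulVec ω).re :=
  perturbative_lower_bound_general D A B C δ hδ hABC hBpsd hCpsd hCle η ω hη hω hBη p hp0 hover
end

section
/- Let ε₁, ε₂ ≥ 0 and let s ∈ [1/2, 1] satisfy (√ε₁ + √ε₂)/2 = 1 − s. Then (ε₁ + ε₂)/3 − (ε₁² + ε₂²)/6 ≥ (2/3)·(1 − s)² − (1/3)·(1 − s)⁴. -/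
/-- For ε₁, ε₂ ≥ 0 and s ∈ [1/2, 1] with (√ε₁ + √ε₂)/2 = 1 − s,
(ε₁ + ε₂)/3 − (ε₁² + ε₂²)/6 ≥ (2/3)(1 − s)² − (1/3)(1 − s)⁴. -/
theorem product_test_rejection_bound (ε₁ ε₂ s : ℝ)
    (hε₁ : 0 ≤ ε₁) (hε₂ : 0 ≤ ε₂)
    (hs0 : 1 / 2 ≤ s) (hs1 : s ≤ 1)
    (hsum : (Real.sqrt ε₁ + Real.sqrt ε₂) / 2 = 1 - s) :
    (ε₁ + ε₂) / 3 - (ε₁ ^ 2 + ε₂ ^ 2) / 6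
      ≥ (2 / 3) * (1 - s) ^ 2 - (1 / 3) * (1 - s) ^ 4 := by
  set a := Real.sqrt ε₁ with ha
  set b := Real.sqrt ε₂ with hb
  have ha0 : 0 ≤ a := Real.sqrt_nonneg _
  have hb0 : 0 ≤ b := Real.sqrt_nonneg _
  have ha2 : a ^ 2 = ε₁ := Real.sq_sqrt hε₁
  have hb2 : b ^ 2 = ε₂ := Real.sq_sqrt hε₂
  have hz : a + b = 2 * (1 - s) := by linarith
  have hz1 : a + b ≤ 1 := by linarith
  rw [← ha2, ← hb2]
  have h1s : 1 - s = (a + b) / 2 := by linarith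
  rw [h1s]
  have h2 : (a + b) ^ 2 ≤ 1 := by nlinarith
  nlinarith [mul_nonneg (sq_nonneg (a - b)) (sub_nonneg.2 h2),
    mul_nonneg (mul_nonneg (mul_nonneg ha0 hb0) ha0) hb0,
    mul_nonneg (mul_nonneg ha0 hb0) (sq_nonneg (a - b)),
    sq_nonneg (a - b), mul_nonneg ha0 hb0]
end

section
/- Let ε₁, ε₂ ∈ [0,1] and s ∈ [1/2, 1]. Then (1/2)·( 1 − [ (ε₁ + ε₂)/3 − (ε₁² + ε₂²)/6 ] ) + (1/2)·min( s + (√ε₁ + √ε₂)/2 , 1 ) ≤ 5/6 + (1/6)·(s² − 2s)². -/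
/- φ(u) = u/2 - u²/3 + u⁴/6 : "sum ≤ 2·midpoint" on x,y ≥ 0 with x+y ≤ 1.
   Identity: 2φ(m) - φ(x) - φ(y) = (1/48)·D·(8 - 6S - D), D=(x-y)², S=(x+y)². -/
private lemma phi_pair (x y : ℝ) (hx : 0 ≤ x) (hy : 0 ≤ y) (hxy : x + y ≤ 1) :
    x/2 - x^2/3 + x^4/6 + (y/2 - y^2/3 + y^4/6)
      ≤ 2 * (((x+y)/2)/2 - ((x+y)/2)^2/3 + ((x+y)/2)^4/6) := by
  have hS : (x+y)^2 ≤ 1 := by nlinarith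
  have hDS : (x-y)^2 ≤ (x+y)^2 := by nlinarith [mul_nonneg hx hy]
  have hD : 0 ≤ (x-y)^2 * (8 - 6*(x+y)^2 - (x-y)^2) :=
    mul_nonneg (sq_nonneg _) (by nlinarith)
  nlinarith [hD]

/- φ monotone on [0,1]: φ(b)-φ(a) = (b-a)(6-4c+c³)/12 + (b-a)c(a-b)²/12, c=a+b. -/
private lemma phi_mono (a b : ℝ) (ha : 0 ≤ a) (hab : a ≤ b) (hb : b ≤ 1) :
    a/2 - a^2/3 + a^4/6 ≤ b/2 - b^2/3 + b^4/6 := by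
  have hc0 : 0 ≤ a + b := by linarith
  have h6 : 0 ≤ 6 - 4*(a+b) + (a+b)^3 := by
    nlinarith [mul_nonneg hc0 (sq_nonneg (a+b-1)), sq_nonneg (a+b-5/4)]
  nlinarith [mul_nonneg (sub_nonneg.2 hab) h6,
    mul_nonneg (mul_nonneg (sub_nonneg.2 hab) hc0) (sq_nonneg (a-b))]

/- h(u) = u²/3 - u⁴/6 monotone on [0,1]: h(b)-h(a) = (b²-a²)(2-a²-b²)/6. -/
private lemma h_mono (a b : ℝ) (ha : 0 ≤ a) (hab : a ≤ b) (hb : b ≤ 1) :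
    a^2/3 - a^4/6 ≤ b^2/3 - b^4/6 := by
  have h1 : 0 ≤ b^2 - a^2 := by nlinarith
  have h2 : 0 ≤ 2 - a^2 - b^2 := by nlinarith
  nlinarith [mul_nonneg h1 h2]

/- h pair lower bound: h(t-d)+h(t+d)-2h(t) = (d²/3)(2-6t²-d²) ≥ 0 for 0≤d≤t≤1/2. -/
private lemma h_pair (t d : ℝ) (hd : 0 ≤ d) (hdt : d ≤ t) (ht : t ≤ 1/2) :
    2 * (t^2/3 - t^4/6) ≤ ((t-d)^2/3 - (t-d)^4/6) + ((t+d)^2/3 - (t+d)^4/6) := by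
  have h2 : 0 ≤ 2 - 6*t^2 - d^2 := by nlinarith
  nlinarith [mul_nonneg (sq_nonneg d) h2]

/-- Soundness bound for the StoqMA(k)-to-StoqMA(2) protocol: for
ε₁, ε₂ ∈ [0,1] and s ∈ [1/2,1],
(1/2)(1 − [(ε₁+ε₂)/3 − (ε₁²+ε₂²)/6]) + (1/2)·min(s + (√ε₁+√ε₂)/2, 1)
  ≤ 5/6 + (1/6)(s² − 2s)². -/
theorem stoqma_two_provers_soundness (ε₁ ε₂ s : ℝ)
    (hε₁0 : 0 ≤ ε₁) (hε₁1 : ε₁ ≤ 1) (hε₂0 : 0 ≤ ε₂) (hε₂1 : ε₂ ≤ 1)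
    (hs0 : 1 / 2 ≤ s) (hs1 : s ≤ 1) :
    (1 / 2) * (1 - ((ε₁ + ε₂) / 3 - (ε₁ ^ 2 + ε₂ ^ 2) / 6))
      + (1 / 2) * min (s + (Real.sqrt ε₁ + Real.sqrt ε₂) / 2) 1
      ≤ 5 / 6 + (1 / 6) * (s ^ 2 - 2 * s) ^ 2 := by
  set x := Real.sqrt ε₁ with hxd
  set y := Real.sqrt ε₂ with hyd
  have hx0 : 0 ≤ x := Real.sqrt_nonneg _
  have hy0 : 0 ≤ y := Real.sqrt_nonneg _
  have hx2 : x ^ 2 = ε₁ := Real.sq_sqrt hε₁0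
  have hy2 : y ^ 2 = ε₂ := Real.sq_sqrt hε₂0
  have hx1 : x ≤ 1 := by nlinarith
  have hy1 : y ≤ 1 := by nlinarith
  have ht0 : (0:ℝ) ≤ 1 - s := by linarith
  have ht : (1:ℝ) - s ≤ 1/2 := by linarith
  rcases le_total (s + (x + y) / 2) 1 with h | h
  · -- min = s + (x+y)/2, and x + y ≤ 2(1-s)
    rw [min_eq_left h]
    have key1 := phi_pair x y hx0 hy0 (by linarith)
    have key2 := phi_mono ((x+y)/2) (1-s) (by linarith) (by linarith) (by linarith)
    rw [← hx2, ← hy2]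
    nlinarith [key1, key2]
  · -- min = 1, and x + y ≥ 2(1-s); need h(x)+h(y) ≥ 2h(1-s)
    rw [min_eq_right h]
    have key : 2 * ((1-s)^2/3 - (1-s)^4/6) ≤ (x^2/3 - x^4/6) + (y^2/3 - y^4/6) := by
      rcases le_total (1-s) x with hx | hx
      · rcases le_total (1-s) y with hy | hy
        · have k1 := h_mono (1-s) x ht0 hx hx1
          have k2 := h_mono (1-s) y ht0 hy hy1
          linarith
        · have k1 := h_pair (1-s) ((1-s) - y) (by linarith) (by linarith) ht
          have k2 := h_mono ((1-s) + ((1-s) - y)) x (by linarith) (by linarith) hx1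
          have he : (1-s) - ((1-s) - y) = y := by ring
          rw [he] at k1
          linarith
      · have k1 := h_pair (1-s) ((1-s) - x) (by linarith) (by linarith) ht
        have k2 := h_mono ((1-s) + ((1-s) - x)) y (by linarith) (by linarith) hy1
        have he : (1-s) - ((1-s) - x) = x := by ring
        rw [he] at k1
        linarith
    rw [← hx2, ← hy2]
    nlinarith [key]
end
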